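/- Let (V, P, g) be 4-dimensional, let {E₁, E₂, PE₁, PE₂} be an orthonormal basis of V, and let L be a Riemannian P-tensor on V. Set ν = L(E₁, E₂, E₁, E₂) and ν* = L(E₁, E₂, E₁, PE₂). Then the Ricci tensor of L satisfies ρ(L)(y, z) = −2ν g(y, z) − 2ν* g(y, Pz) for all y, z ∈ V, and the scalar curvatures satisfy τ(L) = −8ν and τ*(L) = −8ν*. -/

import Mathlib

open scoped RealInnerProductSpace
open Module

/-!
Pair symmetry turns the P-invariance of L in its last two slots into P-invariance in its first
two; with P² = id this gives L(x, Px, ·, ·) = 0 and L(x, Py, ·, ·) = L(Px, y, ·, ·), and the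
Bianchi identity on (x, y, Px, Py) gives L(x, Py, x, Py) = L(x, y, x, y). These identities
evaluate the Ricci form of the frame (x₁, x₂, Px₁, Px₂) at (x₁, x₁), (x₁, Px₁), (x₁, x₂) and
(x₁, Px₂) for arbitrary x₁, x₂; the symmetry x₁ ↔ x₂ of the frame and ρ(Py, z) = ρ(y, Pz) give
the remaining entries, so ρ = −2ν g − 2ν* g(·, P·) on a basis. Since ρ*(y, z) = ρ(y, Pz) and
g(eⱼ, Peⱼ) = 0, tracing gives τ and τ*.
-/

section Algebraic

variable {V : Type*} [AddCommGroup V] [Module ℝ V]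

structure IsCurvatureLike (L : V →ₗ[ℝ] V →ₗ[ℝ] V →ₗ[ℝ] V →ₗ[ℝ] ℝ) : Prop where
  antisymm_left : ∀ x y z w, L x y z w = -L y x z w
  antisymm_right : ∀ x y z w, L x y z w = -L x y w z
  bianchi : ∀ x y z w, L x y z w + L y z x w + L z x y w = 0

structure IsRiemannianPTensor (P : V →ₗ[ℝ] V) (L : V →ₗ[ℝ] V →ₗ[ℝ] V →ₗ[ℝ] V →ₗ[ℝ] ℝ) : Prop
    extends IsCurvatureLike L where
  map_map_right : ∀ x y z w, L x y (P z) (P w) = L x y z w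

namespace IsCurvatureLike

variable {L : V →ₗ[ℝ] V →ₗ[ℝ] V →ₗ[ℝ] V →ₗ[ℝ] ℝ} (hL : IsCurvatureLike L)
include hL

theorem pair_symm (x y z w : V) : L x y z w = L z w x y := by
  linarith [hL.bianchi x w y z, hL.bianchi w y z x, hL.bianchi y z x w, hL.bianchi z x w y,
    hL.antisymm_right x w y z, hL.antisymm_right y z w x, hL.antisymm_right w y x z,
    hL.antisymm_right z x y w, hL.antisymm_left y x w z, hL.antisymm_right x y w z,
    hL.antisymm_left z w y x, hL.antisymm_right w z y x, hL.antisymm_left w z x y]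

theorem apply_self_left (x z w : V) : L x x z w = 0 := by
  linarith [hL.antisymm_left x x z w]

theorem apply_self_right (x y z : V) : L x y z z = 0 := by
  linarith [hL.antisymm_right x y z z]

end IsCurvatureLike

namespace IsRiemannianPTensor

variable {P : V →ₗ[ℝ] V} {L : V →ₗ[ℝ] V →ₗ[ℝ] V →ₗ[ℝ] V →ₗ[ℝ] ℝ}
  (hL : IsRiemannianPTensor P L)
include hL

theorem map_map_left (x y z w : V) : L (P x) (P y) z w = L x y z w := by
  rw [hL.pair_symm, hL.map_map_right, hL.pair_symm]

variable (hP : Function.Involutive P)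
include hP

theorem map_right_comm (x y z w : V) : L x y z (P w) = L x y (P z) w := by
  rw [← hL.map_map_right x y (P z) w, hP]

theorem map_left_comm (x y z w : V) : L x (P y) z w = L (P x) y z w := by
  rw [← hL.map_map_left (P x) y z w, hP]

theorem apply_map_self_left (x z w : V) : L x (P x) z w = 0 := by
  linarith [hL.map_left_comm hP x x z w, hL.antisymm_left (P x) x z w]

theorem apply_map_self_right (x y z : V) : L x y z (P z) = 0 := by
  rw [hL.pair_symm, hL.apply_map_self_left hP]

theorem apply_map_apply_map (x y : V) : L x (P y) x (P y) = L x y x y := by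
  have := hL.bianchi x y (P x) (P y)
  rw [hL.map_map_right, hL.map_left_comm hP, hL.antisymm_left (P x), hL.apply_map_self_left hP]
    at this
  linarith [hL.antisymm_left (P y) x x (P y)]

end IsRiemannianPTensor

section Ricci

variable {ι : Type*} [Fintype ι]

def ricciForm (L : V →ₗ[ℝ] V →ₗ[ℝ] V →ₗ[ℝ] V →ₗ[ℝ] ℝ) (e : ι → V) : V →ₗ[ℝ] V →ₗ[ℝ] ℝ :=
  ∑ i, (L (e i)).compr₂ (LinearMap.applyₗ (e i))

theorem ricciForm_apply (L : V →ₗ[ℝ] V →ₗ[ℝ] V →ₗ[ℝ] V →ₗ[ℝ] ℝ) (e : ι → V) (y z : V) :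
    ricciForm L e y z = ∑ i, L (e i) y z (e i) := by
  simp [ricciForm]

theorem IsCurvatureLike.ricciForm_symm {L : V →ₗ[ℝ] V →ₗ[ℝ] V →ₗ[ℝ] V →ₗ[ℝ] ℝ}
    (hL : IsCurvatureLike L) (e : ι → V) (y z : V) : ricciForm L e y z = ricciForm L e z y := by
  simp only [ricciForm_apply]
  refine Finset.sum_congr rfl fun i _ => ?_
  rw [hL.pair_symm, hL.antisymm_left, hL.antisymm_right, neg_neg]

theorem ricciForm_frame_apply (P : V →ₗ[ℝ] V) (L : V →ₗ[ℝ] V →ₗ[ℝ] V →ₗ[ℝ] V →ₗ[ℝ] ℝ)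
    (x₁ x₂ y z : V) : ricciForm L ![x₁, x₂, P x₁, P x₂] y z =
      L x₁ y z x₁ + L x₂ y z x₂ + L (P x₁) y z (P x₁) + L (P x₂) y z (P x₂) := by
  simp [ricciForm_apply, Fin.sum_univ_four]

theorem ricciForm_frame_comm (P : V →ₗ[ℝ] V) (L : V →ₗ[ℝ] V →ₗ[ℝ] V →ₗ[ℝ] V →ₗ[ℝ] ℝ)
    (x₁ x₂ : V) : ricciForm L ![x₁, x₂, P x₁, P x₂] = ricciForm L ![x₂, x₁, P x₂, P x₁] := by
  ext y z
  simp only [ricciForm_frame_apply]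
  ring

theorem map_frame_apply {P : V →ₗ[ℝ] V} (hP : Function.Involutive P) (x₁ x₂ : V) (j : Fin 4) :
    P (![x₁, x₂, P x₁, P x₂] j) = ![x₁, x₂, P x₁, P x₂] (j + 2) := by
  fin_cases j <;> simp [hP _]

namespace IsRiemannianPTensor

variable {P : V →ₗ[ℝ] V} {L : V →ₗ[ℝ] V →ₗ[ℝ] V →ₗ[ℝ] V →ₗ[ℝ] ℝ}
  (hL : IsRiemannianPTensor P L) (hP : Function.Involutive P)
include hL hP

theorem ricciForm_frame_map_left (x₁ x₂ y z : V) :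
    ricciForm L ![x₁, x₂, P x₁, P x₂] (P y) z = ricciForm L ![x₁, x₂, P x₁, P x₂] y (P z) := by
  have h₁ (x : V) : L x (P y) z x = L (P x) y (P z) (P x) := by
    rw [hL.map_left_comm hP, ← hL.map_right_comm hP, hP]
  have h₂ (x : V) : L (P x) (P y) z (P x) = L x y (P z) x := by
    rw [hL.map_map_left, hL.map_right_comm hP]
  simp only [ricciForm_frame_apply]
  linarith [h₁ x₁, h₁ x₂, h₂ x₁, h₂ x₂]

theorem ricciForm_frame_self (x₁ x₂ : V) :
    ricciForm L ![x₁, x₂, P x₁, P x₂] x₁ x₁ = -2 * L x₁ x₂ x₁ x₂ := by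
  rw [ricciForm_frame_apply]
  linarith [hL.apply_self_left x₁ x₁ x₁, hL.antisymm_left x₂ x₁ x₁ x₂,
    hL.antisymm_left (P x₁) x₁ x₁ (P x₁), hL.apply_map_self_left hP x₁ x₁ (P x₁),
    hL.antisymm_left (P x₂) x₁ x₁ (P x₂), hL.apply_map_apply_map hP x₁ x₂]

theorem ricciForm_frame_map_self (x₁ x₂ : V) :
    ricciForm L ![x₁, x₂, P x₁, P x₂] x₁ (P x₁) = -2 * L x₁ x₂ x₁ (P x₂) := by
  have h₄ : L (P x₂) x₁ (P x₁) (P x₂) = L x₂ (P x₁) x₁ x₂ := by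
    rw [← hL.map_left_comm hP, hL.map_map_right]
  rw [ricciForm_frame_apply]
  linarith [hL.apply_self_left x₁ (P x₁) x₁, hL.map_right_comm hP x₂ x₁ x₁ x₂,
    hL.antisymm_left x₂ x₁ x₁ (P x₂), hL.apply_self_right (P x₁) x₁ (P x₁),
    hL.pair_symm x₂ (P x₁) x₁ x₂, hL.map_right_comm hP x₁ x₂ x₂ x₁,
    hL.antisymm_right x₁ x₂ (P x₂) x₁]

theorem ricciForm_frame_second (x₁ x₂ : V) :
    ricciForm L ![x₁, x₂, P x₁, P x₂] x₁ x₂ = 0 := by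
  rw [ricciForm_frame_apply]
  linarith [hL.apply_self_left x₁ x₂ x₁, hL.apply_self_right x₂ x₁ x₂,
    hL.antisymm_left (P x₁) x₁ x₂ (P x₁), hL.apply_map_self_left hP x₁ x₂ (P x₁),
    hL.apply_map_self_right hP (P x₂) x₁ x₂]

theorem ricciForm_frame_map_second (x₁ x₂ : V) :
    ricciForm L ![x₁, x₂, P x₁, P x₂] x₁ (P x₂) = 0 := by
  rw [ricciForm_frame_apply]
  linarith [hL.apply_self_left x₁ (P x₂) x₁, hL.map_right_comm hP x₂ x₁ x₂ x₂,
    hL.apply_map_self_right hP x₂ x₁ x₂, hL.antisymm_left (P x₁) x₁ (P x₂) (P x₁),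
    hL.apply_map_self_left hP x₁ (P x₂) (P x₁), hL.apply_self_right (P x₂) x₁ (P x₂)]

theorem sum_apply_map_eq_ricciForm (e : ι → V) (y z : V) :
    ∑ i, L (e i) y z (P (e i)) = ricciForm L e y (P z) := by
  simp only [ricciForm_apply, hL.map_right_comm hP]

end IsRiemannianPTensor

end Ricci

end Algebraic

namespace IsRiemannianPTensor

variable {V : Type*} [NormedAddCommGroup V] [InnerProductSpace ℝ V] {P : V →ₗ[ℝ] V}
  {L : V →ₗ[ℝ] V →ₗ[ℝ] V →ₗ[ℝ] V →ₗ[ℝ] ℝ} (hL : IsRiemannianPTensor P L)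
  (hP : Function.Involutive P)
include hL hP

theorem ricciForm_frame_eq {x₁ x₂ : V} (hON : Orthonormal ℝ ![x₁, x₂, P x₁, P x₂])
    (hspan : Submodule.span ℝ (Set.range ![x₁, x₂, P x₁, P x₂]) = ⊤) (y z : V) :
    ricciForm L ![x₁, x₂, P x₁, P x₂] y z =
      -2 * L x₁ x₂ x₁ x₂ * ⟪y, z⟫ - 2 * L x₁ x₂ x₁ (P x₂) * ⟪y, P z⟫ := by
  suffices ricciForm L ![x₁, x₂, P x₁, P x₂] =
      (-2 * L x₁ x₂ x₁ x₂) • innerₗ V + (-2 * L x₁ x₂ x₁ (P x₂)) • (innerₗ V).compl₂ P by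
    rw [this]
    simp only [LinearMap.add_apply, LinearMap.smul_apply, innerₗ_apply_apply,
      LinearMap.compl₂_apply, smul_eq_mul]
    ring
  have h₂₂ : ricciForm L ![x₁, x₂, P x₁, P x₂] x₂ x₂ = -2 * L x₁ x₂ x₁ x₂ := by
    rw [ricciForm_frame_comm, hL.ricciForm_frame_self hP, hL.antisymm_left, hL.antisymm_right,
      neg_neg]
  have h₂₂' : ricciForm L ![x₁, x₂, P x₁, P x₂] x₂ (P x₂) = -2 * L x₁ x₂ x₁ (P x₂) := by
    rw [ricciForm_frame_comm, hL.ricciForm_frame_map_self hP, hL.map_right_comm hP,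
      hL.antisymm_left, hL.antisymm_right, neg_neg]
  have h₂₁ : ricciForm L ![x₁, x₂, P x₁, P x₂] x₂ x₁ = 0 := by
    rw [hL.ricciForm_symm, hL.ricciForm_frame_second hP]
  have h₂₁' : ricciForm L ![x₁, x₂, P x₁, P x₂] x₂ (P x₁) = 0 := by
    rw [ricciForm_frame_comm, hL.ricciForm_frame_map_second hP]
  refine LinearMap.ext_basis (Basis.mk hON.linearIndependent hspan.ge)
    (Basis.mk hON.linearIndependent hspan.ge) fun i j => ?_
  simp only [Basis.mk_apply, LinearMap.add_apply, LinearMap.smul_apply, innerₗ_apply_apply,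
    LinearMap.compl₂_apply, map_frame_apply hP, orthonormal_iff_ite.mp hON]
  fin_cases i <;> fin_cases j <;>
    simp [hP _, hL.ricciForm_frame_map_left hP, hL.ricciForm_frame_self hP,
      hL.ricciForm_frame_map_self hP, hL.ricciForm_frame_second hP,
      hL.ricciForm_frame_map_second hP, h₂₂, h₂₂', h₂₁, h₂₁']

end IsRiemannianPTensor

theorem riemannian_P_tensor_ricci_dim4_general
    {V : Type*} [NormedAddCommGroup V] [InnerProductSpace ℝ V]
    (P : V →ₗ[ℝ] V)
    (hP2 : ∀ x : V, P (P x) = x)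
    (E₁ E₂ : V)
    (e : Fin 4 → V) (he : e = ![E₁, E₂, P E₁, P E₂])
    (hON : Orthonormal ℝ e)
    (hspan : Submodule.span ℝ (Set.range e) = ⊤)
    (L : V →ₗ[ℝ] V →ₗ[ℝ] V →ₗ[ℝ] V →ₗ[ℝ] ℝ)
    (hA1 : ∀ x y z w : V, L x y z w = - L y x z w)
    (hA2 : ∀ x y z w : V, L x y z w = - L x y w z)
    (hBianchi : ∀ x y z w : V, L x y z w + L y z x w + L z x y w = 0)
    (hRP : ∀ x y z w : V, L x y (P z) (P w) = L x y z w)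
    (ν νs : ℝ)
    (hν : ν = L E₁ E₂ E₁ E₂)
    (hνs : νs = L E₁ E₂ E₁ (P E₂)) :
    (∀ y z : V, (∑ i : Fin 4, L (e i) y z (e i)) = -2 * ν * ⟪y, z⟫ - 2 * νs * ⟪y, P z⟫) ∧
    (∑ j : Fin 4, ∑ i : Fin 4, L (e i) (e j) (e j) (e i)) = -8 * ν ∧
    (∑ j : Fin 4, ∑ i : Fin 4, L (e i) (e j) (e j) (P (e i))) = -8 * νs := by
  have hL : IsRiemannianPTensor P L := ⟨⟨hA1, hA2, hBianchi⟩, hRP⟩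
  subst hν hνs
  have ricci := hL.ricciForm_frame_eq hP2 (he ▸ hON) (he ▸ hspan)
  rw [← he] at ricci
  have hself (j : Fin 4) : ⟪e j, e j⟫ = 1 := by
    rw [orthonormal_iff_ite.mp hON, if_pos rfl]
  have hcross (j : Fin 4) : ⟪e j, P (e j)⟫ = 0 := by
    subst he
    rw [map_frame_apply hP2, hON.inner_eq_zero (by fin_cases j <;> decide)]
  refine ⟨fun y z => by rw [← ricciForm_apply, ricci], ?_, ?_⟩
  · simp only [← ricciForm_apply, ricci, hself, hcross, Fin.sum_univ_four]
    ring
  · simp only [hL.sum_apply_map_eq_ricciForm hP2, ricci, hP2, hself, hcross, Fin.sum_univ_four]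
    ring

/-- Let (V, P, g) be 4-dimensional, let {E₁, E₂, PE₁, PE₂} be an
orthonormal basis of V, and let L be a Riemannian P-tensor on V. Set
ν = L(E₁, E₂, E₁, E₂) and ν* = L(E₁, E₂, E₁, PE₂). Then the Ricci tensor of L
satisfies ρ(L)(y,z) = −2ν g(y,z) − 2ν* g(y,Pz) for all y, z ∈ V, and the
scalar curvatures satisfy τ(L) = −8ν and τ*(L) = −8ν*. -/
theorem riemannian_P_tensor_ricci_dim4
    {V : Type*} [NormedAddCommGroup V] [InnerProductSpace ℝ V]
    [FiniteDimensional ℝ V] (hdim : finrank ℝ V = 4)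
    (P : V →ₗ[ℝ] V)
    (hP2 : ∀ x : V, P (P x) = x)
    (hPg : ∀ x y : V, ⟪P x, P y⟫ = ⟪x, y⟫)
    (E₁ E₂ : V)
    (e : Fin 4 → V) (he : e = ![E₁, E₂, P E₁, P E₂])
    (hON : Orthonormal ℝ e)
    (hspan : Submodule.span ℝ (Set.range e) = ⊤)
    (L : V →ₗ[ℝ] V →ₗ[ℝ] V →ₗ[ℝ] V →ₗ[ℝ] ℝ)
    (hA1 : ∀ x y z w : V, L x y z w = - L y x z w)
    (hA2 : ∀ x y z w : V, L x y z w = - L x y w z)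
    (hBianchi : ∀ x y z w : V, L x y z w + L y z x w + L z x y w = 0)
    (hRP : ∀ x y z w : V, L x y (P z) (P w) = L x y z w)
    (ν νs : ℝ)
    (hν : ν = L E₁ E₂ E₁ E₂)
    (hνs : νs = L E₁ E₂ E₁ (P E₂)) :
    (∀ y z : V, (∑ i : Fin 4, L (e i) y z (e i)) = -2 * ν * ⟪y, z⟫ - 2 * νs * ⟪y, P z⟫) ∧
    (∑ j : Fin 4, ∑ i : Fin 4, L (e i) (e j) (e j) (e i)) = -8 * ν ∧
    (∑ j : Fin 4, ∑ i : Fin 4, L (e i) (e j) (e j) (P (e i))) = -8 * νs :=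
  riemannian_P_tensor_ricci_dim4_general P hP2 E₁ E₂ e he hON hspan L hA1 hA2 hBianchi hRP ν νs hν
    hνs
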